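/- arXiv:1002.4372 — 2 statements merged into one kernel-verified Lean document; each statement's English description precedes it below -/
import Mathlib

section
/- If f : X → Y is a Zariski fibration of schemes of finite type over ℂ, then there exists a finite stratification of Y by connected locally closed subschemes Y_i such that for each i the restriction of f over Y_i is a trivial fibration, i.e. there is a scheme F_i and an isomorphism f^{-1}(Y_i) ≅ Y_i × F_i commuting with the projections to Y_i. -/
/-!
Cover `Y` by affine opens `W`, each inside an open over which `f` is trivial. Since `Y` is a
Noetherian space, finitely many `W` suffice; well-ordering them, the sets "in `W` but in no
earlier one" form a finite partition of `Y` into locally closed sets. Every locally closed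
subset of a Noetherian space has finitely many connected components, each open in it, hence
locally closed in `Y`. A locally closed subset of an affine open is the image of an immersion
(an open subscheme of the closed subscheme cut out by its vanishing ideal), and triviality of
`f` over `W` is inherited by every scheme mapping into `W`.
-/

open AlgebraicGeometry CategoryTheory CategoryTheory.Limits

noncomputable section

abbrev SpecC : Scheme := Spec (CommRingCat.of ℂ)

/-- A morphism `f : X ⟶ Y` of schemes over `ℂ` is a Zariski fibration if `Y` is covered
by open subsets `U` over which `f` is trivial: there is a scheme `F` (over `ℂ`) and an
isomorphism `f⁻¹(U) ≅ U × F` commuting with the projections to `U`, where `U × F` is the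
product in schemes over `ℂ`. -/
def IsZariskiFibration {X Y : Scheme} (stY : Y ⟶ SpecC) (f : X ⟶ Y) : Prop :=
  ∀ y : Y, ∃ U : Y.Opens, y ∈ U ∧
    ∃ (F : Scheme) (stF : F ⟶ SpecC)
      (e : pullback f U.ι ≅ pullback (U.ι ≫ stY) stF),
      e.hom ≫ pullback.fst (U.ι ≫ stY) stF = pullback.snd f U.ι

section Topology

open Set TopologicalSpace

variable {α : Type*} [TopologicalSpace α]

theorem TopologicalSpace.NoetherianSpace.isOpen_connectedComponent [NoetherianSpace α] (x : α) :
    IsOpen (connectedComponent x) := by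
  -- the complement is the union of the finitely many irreducible components that miss it
  have hcompl : (connectedComponent x)ᶜ =
      ⋃ Z ∈ {Z ∈ irreducibleComponents α | ¬Z ⊆ connectedComponent x}, Z := by
    ext y
    simp only [mem_compl_iff, mem_iUnion, mem_ofPred_eq, exists_prop]
    constructor
    · intro hy
      exact ⟨irreducibleComponent y, ⟨irreducibleComponent_mem_irreducibleComponents y,
        fun h => hy (h mem_irreducibleComponent)⟩, mem_irreducibleComponent⟩
    · rintro ⟨Z, ⟨hZ, hZx⟩, hyZ⟩ hy
      rw [connectedComponent_eq hy] at hZx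
      exact hZx (hZ.1.isConnected.isPreconnected.subset_connectedComponent hyZ)
  rw [← isClosed_compl_iff, hcompl]
  exact (NoetherianSpace.finite_irreducibleComponents.subset (sep_subset _ _)).isClosed_biUnion
    fun Z hZ => isClosed_of_mem_irreducibleComponents Z hZ.1

instance TopologicalSpace.NoetherianSpace.locallyConnectedSpace [NoetherianSpace α] :
    LocallyConnectedSpace α :=
  locallyConnectedSpace_iff_connectedComponentIn_open.mpr fun F hF x hx => by
    rw [connectedComponentIn_eq_image hx]
    exact hF.isOpenEmbedding_subtypeVal.isOpenMap _
      (NoetherianSpace.isOpen_connectedComponent _)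

theorem IsLocallyClosed.connectedComponentIn [NoetherianSpace α] {s : Set α}
    (hs : IsLocallyClosed s) {x : α} (hx : x ∈ s) :
    IsLocallyClosed (connectedComponentIn s x) := by
  rw [connectedComponentIn_eq_image hx]
  exact isOpen_connectedComponent.isLocallyClosed.image Topology.IsInducing.subtypeVal
    (by rwa [Subtype.range_val])

theorem exists_isLocallyClosed_partition_subordinate {ι : Type*} (W : ι → Set α)
    (hW : ∀ i, IsOpen (W i)) (hcov : ⋃ i, W i = univ) :
    ∃ B : ι → Set α, (∀ i, IsLocallyClosed (B i)) ∧ (∀ i, B i ⊆ W i) ∧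
      ∀ x, ∃! i, x ∈ B i := by
  let r : ι → ι → Prop := WellOrderingRel
  refine ⟨fun i => W i ∩ (⋃ (j) (_ : r j i), W j)ᶜ, fun i => ?_, fun i => inter_subset_left,
    fun x => ?_⟩
  · exact (hW i).isLocallyClosed.inter
      (isOpen_biUnion fun j _ => hW j).isClosed_compl.isLocallyClosed
  have hx : {i | x ∈ W i}.Nonempty := mem_iUnion.mp (hcov.symm ▸ mem_univ x)
  have hwf : WellFounded r := WellOrderingRel.isWellOrder.wf
  refine ⟨hwf.min _ hx, ⟨hwf.min_mem _ hx, ?_⟩, ?_⟩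
  · simp only [mem_compl_iff, mem_iUnion, not_exists]
    exact fun j hj hxj => hwf.not_lt_min _ hxj hj
  · rintro j ⟨hxj, hj⟩
    simp only [mem_compl_iff, mem_iUnion, not_exists] at hj
    rcases trichotomous_of r j (hwf.min _ hx) with h | h | h
    · exact absurd h (hwf.not_lt_min _ hxj)
    · exact h
    · exact absurd (hwf.min_mem _ hx) (hj _ h)

theorem TopologicalSpace.NoetherianSpace.exists_connected_refinement [NoetherianSpace α]
    {ι : Type*} [Finite ι] (B : ι → Set α) (hB : ∀ i, IsLocallyClosed (B i))
    (hpart : ∀ x, ∃! i, x ∈ B i) :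
    ∃ (n : ℕ) (C : Fin n → Set α), (∀ j, IsConnected (C j)) ∧ (∀ j, IsLocallyClosed (C j)) ∧
      (∀ j, ∃ i, C j ⊆ B i) ∧ ∀ x, ∃! j, x ∈ C j := by
  let C : (Σ i, ConnectedComponents (B i)) → Set α := fun p =>
    (↑) '' (ConnectedComponents.mk ⁻¹' {p.2})
  have hC : ∀ i (y : B i), C ⟨i, y⟩ = connectedComponentIn (B i) y := fun i y => by
    simp only [C, connectedComponents_preimage_singleton, connectedComponentIn_eq_image y.2]
  have mem_C : ∀ x p, x ∈ C p ↔ ∃ h : x ∈ B p.1, ConnectedComponents.mk ⟨x, h⟩ = p.2 := by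
    intro x p
    simp [C]
  have hconn : ∀ p, IsConnected (C p) := by
    rintro ⟨i, c⟩
    obtain ⟨y, rfl⟩ := ConnectedComponents.surjective_coe c
    rw [hC]
    exact isConnected_connectedComponentIn_iff.mpr y.2
  have hlc : ∀ p, IsLocallyClosed (C p) := by
    rintro ⟨i, c⟩
    obtain ⟨y, rfl⟩ := ConnectedComponents.surjective_coe c
    rw [hC]
    exact (hB i).connectedComponentIn y.2
  have huniq : ∀ x, ∃! p, x ∈ C p := by
    intro x
    obtain ⟨i, hi, hunique⟩ := hpart x
    refine ⟨⟨i, ConnectedComponents.mk ⟨x, hi⟩⟩, (mem_C _ _).mpr ⟨hi, rfl⟩, ?_⟩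
    rintro ⟨i', c'⟩ hp
    obtain ⟨hi', hc'⟩ := (mem_C _ _).mp hp
    obtain rfl := hunique i' hi'
    exact hc' ▸ rfl
  obtain ⟨n, ⟨e⟩⟩ := Finite.exists_equiv_fin (Σ i, ConnectedComponents (B i))
  exact ⟨n, C ∘ e.symm, fun j => hconn _, fun j => hlc _,
    fun j => ⟨(e.symm j).1, Subtype.coe_image_subset _ _⟩,
    fun x => e.symm.bijective.existsUnique_iff.mp (huniq x)⟩

theorem TopologicalSpace.NoetherianSpace.exists_connected_stratification_subordinate
    [NoetherianSpace α] (W : α → Set α) (hW : ∀ x, IsOpen (W x)) (hxW : ∀ x, x ∈ W x) :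
    ∃ (n : ℕ) (C : Fin n → Set α), (∀ j, IsConnected (C j)) ∧ (∀ j, IsLocallyClosed (C j)) ∧
      (∀ j, ∃ x, C j ⊆ W x) ∧ ∀ x, ∃! j, x ∈ C j := by
  obtain ⟨t, ht⟩ := CompactSpace.elim_nhds_subcover W fun x => (hW x).mem_nhds (hxW x)
  have hcov : ⋃ x : t, W x = univ := by
    rw [← top_eq_univ, ← ht, iUnion_subtype]
  obtain ⟨B, hB, hBW, hpart⟩ :=
    exists_isLocallyClosed_partition_subordinate (fun x : t => W x) (fun x => hW x) hcov
  obtain ⟨n, C, hconn, hlc, hCB, huniq⟩ := exists_connected_refinement B hB hpart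
  refine ⟨n, C, hconn, hlc, fun j => ?_, huniq⟩
  obtain ⟨x, hx⟩ := hCB j
  exact ⟨x, hx.trans (hBW x)⟩

theorem Topology.IsInducing.connectedSpace {β : Type*} [TopologicalSpace β] {f : α → β}
    (hf : IsInducing f) (h : IsConnected (range f)) : ConnectedSpace α := by
  obtain ⟨_, a, rfl⟩ := h.nonempty
  rw [connectedSpace_iff_univ, _root_.IsConnected, ← hf.isPreconnected_image, image_univ]
  exact ⟨⟨a, mem_univ a⟩, h.2⟩

end Topology

namespace AlgebraicGeometry

theorem exists_isImmersion_range_eq_of_isLocallyClosed_spec {R : CommRingCat}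
    {s : Set (Spec R)} (hs : IsLocallyClosed s) :
    ∃ (S : Scheme) (i : S ⟶ Spec R), IsImmersion i ∧ Set.range i.base = s := by
  let I := PrimeSpectrum.vanishingIdeal s
  let q : Spec (CommRingCat.of (R ⧸ I)) ⟶ Spec R :=
    Spec.map (CommRingCat.ofHom (Ideal.Quotient.mk I))
  have hq : Set.range q.base = closure s := by
    rw [Spec.map_base]
    change Set.range (PrimeSpectrum.comap (Ideal.Quotient.mk I)) = _
    rw [range_comap_of_surjective _ _ Ideal.Quotient.mk_surjective, Ideal.mk_ker]
    exact PrimeSpectrum.zeroLocus_vanishingIdeal_eq_closure s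
  let U : (Spec (CommRingCat.of (R ⧸ I))).Opens := q ⁻¹ᵁ ⟨coborder s, hs.isOpen_coborder⟩
  refine ⟨U, U.ι ≫ q, inferInstance, ?_⟩
  rw [Scheme.Hom.comp_base, TopCat.coe_comp, Set.range_comp, Scheme.Opens.range_ι]
  change q.base '' (q.base ⁻¹' coborder s) = s
  rw [Set.image_preimage_eq_inter_range, hq, coborder_inter_closure]

theorem IsAffineOpen.exists_isImmersion_range_eq {Y : Scheme} {W : Y.Opens} (hW : IsAffineOpen W)
    {s : Set Y} (hs : IsLocallyClosed s) (hsW : s ⊆ W) :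
    ∃ (S : Scheme) (i : S ⟶ Y), IsImmersion i ∧ Set.range i.base = s := by
  obtain ⟨S, i, hi, hrange⟩ :=
    exists_isImmersion_range_eq_of_isLocallyClosed_spec (hs.preimage hW.fromSpec.continuous)
  refine ⟨S, i ≫ hW.fromSpec, inferInstance, ?_⟩
  rw [Scheme.Hom.comp_base, TopCat.coe_comp, Set.range_comp, hrange,
    Set.image_preimage_eq_inter_range, hW.range_fromSpec, Set.inter_eq_left.mpr hsW]

def IsTrivialFibrationOver {X Y S T : Scheme} (stY : Y ⟶ S) (f : X ⟶ Y) (g : T ⟶ Y) : Prop :=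
  ∃ (F : Scheme) (stF : F ⟶ S) (e : pullback f g ≅ pullback (g ≫ stY) stF),
    e.hom ≫ pullback.fst (g ≫ stY) stF = pullback.snd f g

section IsTrivialFibrationOver

variable {X Y S T U : Scheme} {stY : Y ⟶ S} {f : X ⟶ Y}

theorem IsTrivialFibrationOver.comp {u : U ⟶ Y} (h : IsTrivialFibrationOver stY f u)
    (j : T ⟶ U) : IsTrivialFibrationOver stY f (j ≫ u) := by
  obtain ⟨F, stF, e, he⟩ := h
  let β := pullback.map (pullback.snd f u) j (pullback.fst (u ≫ stY) stF) j e.hom (𝟙 T) (𝟙 U)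
    (by simp [he]) (by simp)
  -- `X ×_Y T ≅ (X ×_Y U) ×_U T ≅ (U ×_S F) ×_U T ≅ T ×_S F`
  refine ⟨F, stF, (pullbackLeftPullbackSndIso f u j).symm ≪≫ asIso β ≪≫
    pullbackSymmetry _ _ ≪≫ pullbackRightPullbackFstIso (u ≫ stY) stF j ≪≫
    pullback.congrHom (Category.assoc _ _ _).symm rfl, ?_⟩
  simp [β, pullback.lift_fst, pullback.lift_snd]

theorem IsTrivialFibrationOver.of_range_subset {u : U ⟶ Y} [IsOpenImmersion u]
    (h : IsTrivialFibrationOver stY f u) {g : T ⟶ Y} (hg : Set.range g.base ⊆ Set.range u.base) :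
    IsTrivialFibrationOver stY f g := by
  simpa only [IsOpenImmersion.lift_fac] using h.comp (IsOpenImmersion.lift u g hg)

end IsTrivialFibrationOver

theorem exists_connected_stratification_isTrivialFibrationOver {X Y S : Scheme}
    [TopologicalSpace.NoetherianSpace Y] (stY : Y ⟶ S) (f : X ⟶ Y)
    (hf : ∀ y : Y, ∃ U : Y.Opens, y ∈ U ∧ IsTrivialFibrationOver stY f U.ι) :
    ∃ (n : ℕ) (T : Fin n → Scheme) (inc : ∀ i, T i ⟶ Y),
      (∀ i, IsImmersion (inc i)) ∧ (∀ i, ConnectedSpace (T i)) ∧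
      (∀ y : Y, ∃! i, y ∈ Set.range (inc i).base) ∧
      ∀ i, IsTrivialFibrationOver stY f (inc i) := by
  have hW : ∀ y : Y, ∃ W : Y.Opens, y ∈ W ∧ IsAffineOpen W ∧
      IsTrivialFibrationOver stY f W.ι := by
    intro y
    obtain ⟨U, hyU, hU⟩ := hf y
    obtain ⟨W, hW, hyW, hWU⟩ :=
      TopologicalSpace.Opens.isBasis_iff_nbhd.mp Y.isBasis_affineOpens hyU
    exact ⟨W, hyW, hW, hU.of_range_subset (by simpa using hWU)⟩
  choose W hyW hWaff hWtriv using hW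
  obtain ⟨n, C, hconn, hlc, hCW, hpart⟩ :=
    TopologicalSpace.NoetherianSpace.exists_connected_stratification_subordinate
      (fun y => (W y : Set Y)) (fun y => (W y).isOpen) hyW
  have hstratum : ∀ j, ∃ (T : Scheme) (inc : T ⟶ Y), IsImmersion inc ∧
      Set.range inc.base = C j ∧ ConnectedSpace T ∧ IsTrivialFibrationOver stY f inc := by
    intro j
    obtain ⟨y, hCy⟩ := hCW j
    obtain ⟨T, inc, hinc, hrange⟩ := (hWaff y).exists_isImmersion_range_eq (hlc j) hCy
    refine ⟨T, inc, hinc, hrange, inc.isEmbedding.isInducing.connectedSpace (hrange ▸ hconn j),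
      (hWtriv y).of_range_subset ?_⟩
    rwa [hrange, Scheme.Opens.range_ι]
  choose T inc hinc hrange hconnT htriv using hstratum
  exact ⟨n, T, inc, hinc, hconnT, fun y => by simpa only [hrange] using hpart y, htriv⟩

end AlgebraicGeometry

theorem stmt_2_general (X Y : Scheme) (stY : Y ⟶ SpecC)
    (hlftY : LocallyOfFiniteType stY) (hqcY : QuasiCompact stY)
    (f : X ⟶ Y) (hzf : IsZariskiFibration stY f) :
    ∃ (n : ℕ) (S : Fin n → Scheme) (inc : ∀ i, S i ⟶ Y),
      (∀ i, IsImmersion (inc i)) ∧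
      (∀ i, ConnectedSpace (S i)) ∧
      (∀ y : Y, ∃! i, y ∈ Set.range (inc i).base) ∧
      (∀ i, ∃ (F : Scheme) (stF : F ⟶ SpecC)
        (e : pullback f (inc i) ≅ pullback (inc i ≫ stY) stF),
        e.hom ≫ pullback.fst (inc i ≫ stY) stF = pullback.snd f (inc i)) := by
  have : IsLocallyNoetherian Y := LocallyOfFiniteType.isLocallyNoetherian stY
  have : CompactSpace Y := QuasiCompact.compactSpace_of_compactSpace stY
  have : IsNoetherian Y := {}
  exact exists_connected_stratification_isTrivialFibrationOver stY f hzf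

/-- If `f : X → Y` is a Zariski fibration of schemes of finite type over
`ℂ`, then there is a finite stratification of `Y` by connected locally closed subschemes
`S i` (every point of `Y` lies in exactly one stratum) such that over each `S i` the
fibration `f` is trivial: there is a scheme `F` and an isomorphism `f⁻¹(S i) ≅ S i × F`
commuting with the projections to `S i`. -/
theorem stmt_2 (X Y : Scheme) (stX : X ⟶ SpecC) (stY : Y ⟶ SpecC)
    (hlftX : LocallyOfFiniteType stX) (hqcX : QuasiCompact stX)
    (hlftY : LocallyOfFiniteType stY) (hqcY : QuasiCompact stY)
    (f : X ⟶ Y) (hf : f ≫ stY = stX) (hzf : IsZariskiFibration stY f) :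
    ∃ (n : ℕ) (S : Fin n → Scheme) (inc : ∀ i, S i ⟶ Y),
      (∀ i, IsImmersion (inc i)) ∧
      (∀ i, ConnectedSpace (S i)) ∧
      (∀ y : Y, ∃! i, y ∈ Set.range (inc i).base) ∧
      (∀ i, ∃ (F : Scheme) (stF : F ⟶ SpecC)
        (e : pullback f (inc i) ≅ pullback (inc i ≫ stY) stF),
        e.hom ≫ pullback.fst (inc i ≫ stY) stF = pullback.snd f (inc i)) :=
  stmt_2_general X Y stY hlftY hqcY f hzf

end
end

section
/- Consider a 2-commutative diagram of categories and functors consisting of two horizontally adjacent squares: V → W → Y on top, U → X → Z on the bottom, with vertical functors V → U, W → X and Y → Z, together with natural isomorphisms making each small square 2-commutative (and hence, by pasting, the outer rectangle 2-commutative). If the right-hand small square is 2-Cartesian, then the left-hand small square is 2-Cartesian if and only if the outer rectangle is 2-Cartesian. -/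
open CategoryTheory

universe v₁ v₂ v₃ v₄ v₅ v₆ u₁ u₂ u₃ u₄ u₅ u₆

section IsoFibre

variable {X : Type u₁} {Y : Type u₂} {Z : Type u₃}
  [Category.{v₁} X] [Category.{v₂} Y] [Category.{v₃} Z]

/-- The iso-fibre product of two functors `F : 𝒳 ⥤ 𝒵` and `G : 𝒴 ⥤ 𝒵`: the category of
triples `(x, y, θ)` with `θ : F(x) ≅ G(y)` an isomorphism, morphisms
`(x, y, θ) → (x', y', θ')` being pairs `(α : x ⟶ x', β : y ⟶ y')` with
`θ' ∘ F(α) = G(β) ∘ θ`. -/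
def IsoFibreProd (F : X ⥤ Z) (G : Y ⥤ Z) :=
  ObjectProperty.FullSubcategory fun c : Comma F G => IsIso c.hom

instance (F : X ⥤ Z) (G : Y ⥤ Z) : Category (IsoFibreProd F G) :=
  ObjectProperty.FullSubcategory.category _

/-- The comparison functor from the corner of a 2-commutative square to the iso-fibre
product of the other two sides. -/
def comparison {W : Type u₄} [Category.{v₄} W]
    (p : W ⥤ X) (q : W ⥤ Y) (F : X ⥤ Z) (G : Y ⥤ Z) (α : p ⋙ F ≅ q ⋙ G) :
    W ⥤ IsoFibreProd F G where
  obj w := ⟨⟨p.obj w, q.obj w, α.hom.app w⟩, inferInstance⟩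
  map {w w'} m := ⟨p.map m, q.map m, α.hom.naturality m⟩

/-- A 2-commutative square of categories is 2-Cartesian if the comparison functor into
the iso-fibre product is an equivalence of categories. -/
def Is2Cartesian {W : Type u₄} [Category.{v₄} W]
    (p : W ⥤ X) (q : W ⥤ Y) (F : X ⥤ Z) (G : Y ⥤ Z) (α : p ⋙ F ≅ q ⋙ G) : Prop :=
  (comparison p q F G α).IsEquivalence

end IsoFibre

/-!
Whiskering by the right square gives a functor `paste : 𝒰 ×_𝒳 𝒲 ⥤ 𝒰 ×_𝒵 𝒴`,
`(u, w, θ) ↦ (u, g w, β⁻¹ ∘ k θ)`. It inherits faithfulness, fullness and essential surjectivity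
from the comparison functor `𝒲 ⥤ 𝒳 ×_𝒵 𝒴` of the right square, so it is an equivalence when that
square is 2-Cartesian. The comparison functor of the outer rectangle is isomorphic to the
comparison functor of the left square followed by `paste`, and equivalences satisfy 2-out-of-3.
-/

namespace IsoFibreProd

section Basic

variable {X : Type u₁} {Y : Type u₂} {Z : Type u₃}
  [Category.{v₁} X] [Category.{v₂} Y] [Category.{v₃} Z] {F : X ⥤ Z} {G : Y ⥤ Z}

-- `IsoFibreProd` is a plain `def`, so a term `A.obj` is not type-correct at reducible
-- transparency and defeats `rw`/`simp`; these accessors keep it out of statements.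
abbrev left (A : IsoFibreProd F G) : X := A.obj.left

abbrev right (A : IsoFibreProd F G) : Y := A.obj.right

noncomputable def iso (A : IsoFibreProd F G) : F.obj A.left ≅ G.obj A.right :=
  @asIso _ _ _ _ A.obj.hom A.property

abbrev homLeft {A B : IsoFibreProd F G} (p : A ⟶ B) : A.left ⟶ B.left := p.hom.left

abbrev homRight {A B : IsoFibreProd F G} (p : A ⟶ B) : A.right ⟶ B.right := p.hom.right

lemma iso_hom_naturality {A B : IsoFibreProd F G} (p : A ⟶ B) :
    F.map (homLeft p) ≫ B.iso.hom = A.iso.hom ≫ G.map (homRight p) :=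
  p.hom.w

lemma hom_ext {A B : IsoFibreProd F G} {p q : A ⟶ B}
    (hl : homLeft p = homLeft q) (hr : homRight p = homRight q) : p = q :=
  ObjectProperty.hom_ext _ (CommaMorphism.ext hl hr)

abbrev mk {x : X} {y : Y} (θ : F.obj x ≅ G.obj y) : IsoFibreProd F G :=
  ⟨⟨x, y, θ.hom⟩, inferInstance⟩

@[simp] lemma mk_iso {x : X} {y : Y} (θ : F.obj x ≅ G.obj y) : (mk θ).iso = θ := by
  ext; rfl

abbrev homMk {A B : IsoFibreProd F G} (l : A.left ⟶ B.left) (r : A.right ⟶ B.right)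
    (w : F.map l ≫ B.iso.hom = A.iso.hom ≫ G.map r) : A ⟶ B :=
  ObjectProperty.homMk ⟨l, r, w⟩

def isoMk {A B : IsoFibreProd F G} (l : A.left ≅ B.left) (r : A.right ≅ B.right)
    (w : F.map l.hom ≫ B.iso.hom = A.iso.hom ≫ G.map r.hom) : A ≅ B :=
  ObjectProperty.isoMk _ (Comma.isoMk l r w)

def leftIso {A B : IsoFibreProd F G} (e : A ≅ B) : A.left ≅ B.left :=
  Comma.leftIso ((ObjectProperty.ι _).mapIso e)

def rightIso {A B : IsoFibreProd F G} (e : A ≅ B) : A.right ≅ B.right :=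
  Comma.rightIso ((ObjectProperty.ι _).mapIso e)

lemma map_homRight {A B : IsoFibreProd F G} (p : A ⟶ B) :
    G.map (homRight p) = A.iso.inv ≫ F.map (homLeft p) ≫ B.iso.hom := by
  rw [iso_hom_naturality, Iso.inv_hom_id_assoc]

end Basic

section Comparison

variable {X : Type u₁} {Y : Type u₂} {Z : Type u₃} {W : Type u₄}
  [Category.{v₁} X] [Category.{v₂} Y] [Category.{v₃} Z] [Category.{v₄} W]
  (p : W ⥤ X) (q : W ⥤ Y) (F : X ⥤ Z) (G : Y ⥤ Z) (α : p ⋙ F ≅ q ⋙ G)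

@[simp] lemma comparison_obj_left (w : W) : ((comparison p q F G α).obj w).left = p.obj w := rfl

@[simp] lemma comparison_obj_right (w : W) : ((comparison p q F G α).obj w).right = q.obj w := rfl

@[simp] lemma comparison_obj_iso (w : W) : ((comparison p q F G α).obj w).iso = α.app w := by
  ext; rfl

end Comparison

section Paste

variable {W : Type u₂} {Y : Type u₃} {U : Type u₄} {X : Type u₅} {Z : Type u₆}
  [Category.{v₂} W] [Category.{v₃} Y] [Category.{v₄} U] [Category.{v₅} X]
  [Category.{v₆} Z] {b : W ⥤ X} {c : Y ⥤ Z} {k : X ⥤ Z}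
  (h : U ⥤ X) (g : W ⥤ Y) (β : g ⋙ c ≅ b ⋙ k)

lemma paste_naturality {A B : IsoFibreProd h b} (p : A ⟶ B) :
    (h ⋙ k).map (homLeft p) ≫ (k.map B.iso.hom ≫ β.inv.app B.right) =
      (k.map A.iso.hom ≫ β.inv.app A.right) ≫ c.map (g.map (homRight p)) := by
  rw [Functor.comp_map, Category.assoc, ← k.map_comp_assoc, iso_hom_naturality, k.map_comp_assoc]
  exact congrArg (k.map A.iso.hom ≫ ·) (β.inv.naturality (homRight p))

noncomputable def paste : IsoFibreProd h b ⥤ IsoFibreProd (h ⋙ k) c where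
  obj A := mk (k.mapIso A.iso ≪≫ β.symm.app A.right)
  map p := homMk (homLeft p :) (g.map (homRight p)) (paste_naturality h g β p)
  map_id _ := hom_ext rfl (g.map_id _)
  map_comp _ _ := hom_ext rfl (g.map_comp _ _)

@[simp] lemma paste_obj_left (A : IsoFibreProd h b) : ((paste h g β).obj A).left = A.left := rfl

@[simp] lemma paste_obj_right (A : IsoFibreProd h b) :
    ((paste h g β).obj A).right = g.obj A.right := rfl

@[simp] lemma paste_obj_iso (A : IsoFibreProd h b) :
    ((paste h g β).obj A).iso = k.mapIso A.iso ≪≫ β.symm.app A.right := mk_iso _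

@[simp] lemma homLeft_paste_map {A B : IsoFibreProd h b} (p : A ⟶ B) :
    homLeft ((paste h g β).map p) = homLeft p := rfl

@[simp] lemma homRight_paste_map {A B : IsoFibreProd h b} (p : A ⟶ B) :
    homRight ((paste h g β).map p) = g.map (homRight p) := rfl

instance faithful_paste [(comparison b g k c β.symm).Faithful] : (paste h g β).Faithful where
  map_injective {A B} p q hpq := by
    have hl : homLeft p = homLeft q := by simpa using congrArg homLeft hpq
    have hg : g.map (homRight p) = g.map (homRight q) := by simpa using congrArg homRight hpq
    have hb : b.map (homRight p) = b.map (homRight q) := by rw [map_homRight, map_homRight, hl]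
    refine hom_ext hl ((comparison b g k c β.symm).map_injective (hom_ext ?_ ?_)) <;> simpa

lemma exists_homLeft_eq_and_map_homRight_eq [(comparison b g k c β.symm).Full]
    {A B : IsoFibreProd h b} (l : A.left ⟶ B.left) (r : g.obj A.right ⟶ g.obj B.right)
    (w : k.map (h.map l) ≫ k.map B.iso.hom ≫ β.inv.app B.right =
      (k.map A.iso.hom ≫ β.inv.app A.right) ≫ c.map r) :
    ∃ p : A ⟶ B, homLeft p = l ∧ g.map (homRight p) = r := by
  have w' : k.map (A.iso.inv ≫ h.map l ≫ B.iso.hom) ≫ β.inv.app B.right =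
      β.inv.app A.right ≫ c.map r := by
    rw [← cancel_epi (k.map A.iso.hom), ← k.map_comp_assoc, Iso.hom_inv_id_assoc,
      k.map_comp_assoc, w, Category.assoc]
  obtain ⟨ψ, hψ⟩ := (comparison b g k c β.symm).map_surjective
    (homMk (A.iso.inv ≫ h.map l ≫ B.iso.hom) r w')
  have hb : b.map ψ = A.iso.inv ≫ h.map l ≫ B.iso.hom := congrArg homLeft hψ
  exact ⟨homMk l ψ (by simp [hb]), rfl, congrArg homRight hψ⟩

instance full_paste [(comparison b g k c β.symm).Full] : (paste h g β).Full where
  map_surjective q := by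
    obtain ⟨p, hl, hr⟩ :=
      exists_homLeft_eq_and_map_homRight_eq h g β (homLeft q :) (homRight q) (iso_hom_naturality q)
    exact ⟨p, hom_ext hl hr⟩

instance essSurj_paste [(comparison b g k c β.symm).EssSurj] : (paste h g β).EssSurj where
  mem_essImage C := by
    obtain ⟨w, ⟨e⟩⟩ :=
      Functor.EssSurj.mem_essImage (comparison b g k c β.symm) (mk (F := k) C.iso)
    let θ : b.obj w ≅ h.obj C.left := leftIso e
    let ρ : g.obj w ≅ C.right := rightIso e
    have he : k.map θ.hom ≫ C.iso.hom = β.inv.app w ≫ c.map ρ.hom := iso_hom_naturality e.hom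
    refine ⟨mk θ.symm, ⟨isoMk (Iso.refl C.left :) ρ ?_⟩⟩
    show (h ⋙ k).map (𝟙 C.left) ≫ C.iso.hom =
      (k.map θ.inv ≫ β.inv.app w) ≫ c.map ρ.hom
    simp [← he]

instance isEquivalence_paste [(comparison b g k c β.symm).IsEquivalence] :
    (paste h g β).IsEquivalence where

end Paste

end IsoFibreProd

open IsoFibreProd in
noncomputable def comparisonPasteIso
    {V : Type u₁} {W : Type u₂} {Y : Type u₃} {U : Type u₄} {X : Type u₅} {Z : Type u₆}
    [Category.{v₁} V] [Category.{v₂} W] [Category.{v₃} Y]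
    [Category.{v₄} U] [Category.{v₅} X] [Category.{v₆} Z]
    (f : V ⥤ W) (g : W ⥤ Y) (a : V ⥤ U) (b : W ⥤ X) (c : Y ⥤ Z)
    (h : U ⥤ X) (k : X ⥤ Z) (α : f ⋙ b ≅ a ⋙ h) (β : g ⋙ c ≅ b ⋙ k) :
    comparison a (f ⋙ g) (h ⋙ k) c
      ((Functor.associator a h k).symm ≪≫ Functor.isoWhiskerRight α.symm k ≪≫
        Functor.associator f b k ≪≫ Functor.isoWhiskerLeft f β.symm ≪≫
        (Functor.associator f g c).symm) ≅
      comparison a f h b α.symm ⋙ paste h g β :=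
  NatIso.ofComponents (fun v => isoMk (Iso.refl _) (Iso.refl _) (by simp))
    fun m => hom_ext (show a.map m ≫ 𝟙 _ = 𝟙 _ ≫ a.map m by simp)
      (show g.map (f.map m) ≫ 𝟙 _ = 𝟙 _ ≫ g.map (f.map m) by simp)

/-- **Statement 12.** Given a 2-commutative diagram of categories consisting of two
horizontally adjacent squares (top row `V → W → Y`, bottom row `U → X → Z`, vertical
functors `a : V ⥤ U`, `b : W ⥤ X`, `c : Y ⥤ Z`, with natural isomorphisms
`α : f ⋙ b ≅ a ⋙ h` and `β : g ⋙ c ≅ b ⋙ k` for the two small squares), if the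
right-hand square is 2-Cartesian then the left-hand square is 2-Cartesian if and only if
the outer rectangle (with its pasted natural isomorphism) is 2-Cartesian. -/
theorem stmt_12
    {V : Type u₁} {W : Type u₂} {Y : Type u₃} {U : Type u₄} {X : Type u₅} {Z : Type u₆}
    [Category.{v₁} V] [Category.{v₂} W] [Category.{v₃} Y]
    [Category.{v₄} U] [Category.{v₅} X] [Category.{v₆} Z]
    (f : V ⥤ W) (g : W ⥤ Y) (a : V ⥤ U) (b : W ⥤ X) (c : Y ⥤ Z)
    (h : U ⥤ X) (k : X ⥤ Z)
    (α : f ⋙ b ≅ a ⋙ h) (β : g ⋙ c ≅ b ⋙ k)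
    (hright : Is2Cartesian b g k c β.symm) :
    Is2Cartesian a f h b α.symm ↔
      Is2Cartesian a (f ⋙ g) (h ⋙ k) c
        ((Functor.associator a h k).symm ≪≫ Functor.isoWhiskerRight α.symm k ≪≫
          Functor.associator f b k ≪≫ Functor.isoWhiskerLeft f β.symm ≪≫
          (Functor.associator f g c).symm) := by
  have : (comparison b g k c β.symm).IsEquivalence := hright
  rw [Is2Cartesian, Is2Cartesian,
    Functor.isEquivalence_iff_of_iso (comparisonPasteIso f g a b c h k α β)]
  exact ⟨fun _ => inferInstance,
    fun _ => Functor.isEquivalence_of_comp_right _ (IsoFibreProd.paste h g β)⟩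
end
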